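/- Let M be a symmetric positive definite matrix, K a matrix, and N = K (Kᵀ M⁻¹ K)⁺ Kᵀ with (Kᵀ M⁻¹ K)⁺ the Moore–Penrose pseudoinverse. Then (N M^{-1/2}) (N M^{-1/2})ᵀ = N M⁻¹ N = N; i.e., N M^{-1/2} is a square root of N. -/
import Mathlib

open Matrix

/-- The four Penrose conditions defining the Moore–Penrose pseudoinverse. -/
def IsMoorePenrose {n m : Type*} [Fintype n] [Fintype m] [DecidableEq n] [DecidableEq m]
    (A : Matrix n m ℝ) (P : Matrix m n ℝ) : Prop :=
  A * P * A = A ∧ P * A * P = P ∧ (A * P)ᵀ = A * P ∧ (P * A)ᵀ = P * A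

theorem mp_unique {n m : ℕ} (A : Matrix (Fin n) (Fin m) ℝ) (P Q : Matrix (Fin m) (Fin n) ℝ)
    (hP : IsMoorePenrose A P) (hQ : IsMoorePenrose A Q) : P = Q := by
  obtain ⟨p1, p2, p3, p4⟩ := hP
  obtain ⟨q1, q2, q3, q4⟩ := hQ
  have hAP : A * P = A * Q := by
    calc A * P = Pᵀ * Aᵀ := by rw [← transpose_mul, p3]
    _ = Pᵀ * (A * Q * A)ᵀ := by rw [q1]
    _ = Pᵀ * (Aᵀ * (A * Q)ᵀ) := by rw [transpose_mul]
    _ = (Pᵀ * Aᵀ) * (A * Q)ᵀ := by rw [Matrix.mul_assoc]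
    _ = (A * P) * (A * Q) := by rw [← transpose_mul, p3, q3]
    _ = (A * P * A) * Q := by simp only [Matrix.mul_assoc]
    _ = A * Q := by rw [p1]
  have hPA : P * A = Q * A := by
    calc P * A = Aᵀ * Pᵀ := by rw [← transpose_mul, p4]
    _ = (A * Q * A)ᵀ * Pᵀ := by rw [q1]
    _ = (Aᵀ * Qᵀ) * (Aᵀ * Pᵀ) := by simp only [transpose_mul, Matrix.mul_assoc]
    _ = (Q * A)ᵀ * (P * A)ᵀ := by rw [transpose_mul, transpose_mul]
    _ = (Q * A) * (P * A) := by rw [q4, p4]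
    _ = Q * (A * P * A) := by simp only [Matrix.mul_assoc]
    _ = Q * A := by rw [p1]
  calc P = P * A * P := p2.symm
  _ = Q * A * P := by rw [hPA]
  _ = Q * (A * P) := by rw [Matrix.mul_assoc]
  _ = Q * (A * Q) := by rw [hAP]
  _ = Q := by rw [← Matrix.mul_assoc]; exact q2

/-- With `M` SPD with SPD square root `S` (so `M^{-1/2} = S⁻¹`), and
`N = K (Kᵀ M⁻¹ K)⁺ Kᵀ`, we have `(N M^{-1/2})(N M^{-1/2})ᵀ = N M⁻¹ N = N`. -/
theorem stmt1 {n m : ℕ} (M S : Matrix (Fin n) (Fin n) ℝ) (hM : M.PosDef)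
    (hS : S.PosDef) (hSsq : S * S = M)
    (K : Matrix (Fin n) (Fin m) ℝ) (P : Matrix (Fin m) (Fin m) ℝ)
    (hP : IsMoorePenrose (Kᵀ * M⁻¹ * K) P) :
    (K * P * Kᵀ * S⁻¹) * (K * P * Kᵀ * S⁻¹)ᵀ = (K * P * Kᵀ) * M⁻¹ * (K * P * Kᵀ) ∧
    (K * P * Kᵀ) * M⁻¹ * (K * P * Kᵀ) = K * P * Kᵀ := by
  have hMT : Mᵀ = M := hM.isHermitian.eq
  have hMinvT : (M⁻¹)ᵀ = M⁻¹ := by rw [transpose_nonsing_inv, hMT]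
  have hAT : (Kᵀ * M⁻¹ * K)ᵀ = Kᵀ * M⁻¹ * K := by
    rw [transpose_mul, transpose_mul, transpose_transpose, hMinvT, Matrix.mul_assoc]
  have hPt : IsMoorePenrose (Kᵀ * M⁻¹ * K) Pᵀ := by
    obtain ⟨p1, p2, p3, p4⟩ := hP
    set A := Kᵀ * M⁻¹ * K
    refine ⟨?_, ?_, ?_, ?_⟩
    · have := congrArg Matrix.transpose p1
      simp only [transpose_mul, hAT] at this
      calc A * Pᵀ * A = Aᵀ * Pᵀ * Aᵀ := by rw [hAT]
      _ = (A * P * A)ᵀ := by simp only [transpose_mul, Matrix.mul_assoc]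
      _ = Aᵀ := by rw [p1]
      _ = A := hAT
    · calc Pᵀ * A * Pᵀ = Pᵀ * Aᵀ * Pᵀ := by rw [hAT]
      _ = (P * A * P)ᵀ := by simp only [transpose_mul, Matrix.mul_assoc]
      _ = Pᵀ := by rw [p2]
    · calc (A * Pᵀ)ᵀ = P * Aᵀ := by rw [transpose_mul, transpose_transpose]
      _ = P * A := by rw [hAT]
      _ = (P * A)ᵀ := p4.symm
      _ = Aᵀ * Pᵀ := by rw [transpose_mul]
      _ = A * Pᵀ := by rw [hAT]
    · calc (Pᵀ * A)ᵀ = Aᵀ * P := by rw [transpose_mul, transpose_transpose]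
      _ = A * P := by rw [hAT]
      _ = (A * P)ᵀ := p3.symm
      _ = Pᵀ * Aᵀ := by rw [transpose_mul]
      _ = Pᵀ * A := by rw [hAT]
  have hPT : Pᵀ = P := mp_unique (Kᵀ * M⁻¹ * K) Pᵀ P hPt hP
  have hST : Sᵀ = S := hS.isHermitian.eq
  have hSinvT : (S⁻¹)ᵀ = S⁻¹ := by rw [transpose_nonsing_inv, hST]
  have hSinv : S⁻¹ * S⁻¹ = M⁻¹ := by rw [← hSsq, Matrix.mul_inv_rev]
  have key : P * (Kᵀ * M⁻¹ * K) * P * Kᵀ = P * Kᵀ := by rw [hP.2.1]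
  have h2 : (K * P * Kᵀ) * M⁻¹ * (K * P * Kᵀ) = K * P * Kᵀ := by
    simp only [Matrix.mul_assoc] at key ⊢
    rw [key]
  refine ⟨?_, h2⟩
  calc (K * P * Kᵀ * S⁻¹) * (K * P * Kᵀ * S⁻¹)ᵀ
      = (K * P * Kᵀ) * (S⁻¹ * S⁻¹) * (K * Pᵀ * Kᵀ) := by
        simp only [transpose_mul, transpose_transpose, hSinvT, Matrix.mul_assoc]
  _ = (K * P * Kᵀ) * M⁻¹ * (K * P * Kᵀ) := by rw [hSinv, hPT]
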